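/- arXiv:2510.04270 — 3 statements merged into one kernel-verified Lean document; each statement's English description precedes it below -/
import Mathlib

section
/- Let ε ∈ (0,1), m > 1, t ≥ 0, y ∈ ℝ, v > 0 with y ≠ v^α. Then ∫₀^t e^{(t-s)/ε} / (1 + e^{m(t-s)/ε}|y - v^α|^m) ds ≤ (C ε / |y - v^α|) · min{1, e^{t/ε}|y-v^α|} / (1 + |y-v^α|^{m-1}) for some constant C depending only on m. -/
/-! The substitution `x = a e^{(t-s)/ε}`, `a = |y - v^α|`, turns the integral into
`(ε / a) ∫_a^{a e^{t/ε}} dx / (1 + x^m)`. Bounding the integrand by `1` gives `b - a ≤ b` on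
`[a, b]`, bounding it by `x^{-m}` gives `a^{1-m} / (m - 1)`; splitting at `x = 1` when
`a < 1 < b` and comparing `1 + a^{m-1}` with `2` or `2 a^{m-1}` yields the claim with
`C = 2m / (m - 1)`. -/

open Real Set intervalIntegral
open scoped Interval

lemma continuousOn_inv_one_add_rpow (m : ℝ) :
    ContinuousOn (fun x : ℝ => (1 + x ^ m)⁻¹) (Ioi 0) := fun x (hx : 0 < x) =>
  (((continuousAt_rpow_const x m (Or.inl hx.ne')).const_add 1).inv₀
    (by positivity)).continuousWithinAt

lemma intervalIntegrable_inv_one_add_rpow (m : ℝ) {a b : ℝ} (ha : 0 < a) (hb : 0 < b) :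
    IntervalIntegrable (fun x : ℝ => (1 + x ^ m)⁻¹) MeasureTheory.volume a b :=
  ((continuousOn_inv_one_add_rpow m).mono fun _ hx =>
    lt_of_lt_of_le (lt_min ha hb) hx.1).intervalIntegrable

lemma integral_inv_one_add_rpow_le_sub (m : ℝ) {a b : ℝ} (ha : 0 ≤ a) (hab : a ≤ b) :
    ∫ x in a..b, (1 + x ^ m)⁻¹ ≤ b - a := by
  have hbound : ∀ x ∈ Ι a b, ‖(1 + x ^ m)⁻¹‖ ≤ 1 := fun x hx => by
    have hx : 0 ≤ x := ha.trans (uIoc_of_le hab ▸ hx).1.le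
    rw [norm_inv, Real.norm_of_nonneg (by positivity)]
    exact inv_le_one_of_one_le₀ (le_add_of_nonneg_right (rpow_nonneg hx m))
  calc ∫ x in a..b, (1 + x ^ m)⁻¹ ≤ ‖∫ x in a..b, (1 + x ^ m)⁻¹‖ := le_norm_self _
    _ ≤ 1 * |b - a| := norm_integral_le_of_norm_le_const hbound
    _ = b - a := by rw [one_mul, abs_of_nonneg (sub_nonneg.mpr hab)]

lemma integral_inv_one_add_rpow_le_rpow {m a b : ℝ} (hm : 1 < m) (ha : 0 < a) (hab : a ≤ b) :
    ∫ x in a..b, (1 + x ^ m)⁻¹ ≤ a ^ (1 - m) / (m - 1) := by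
  have hpos : ∀ x ∈ Icc a b, 0 < x := fun x hx => ha.trans_le hx.1
  have h0 : (0 : ℝ) ∉ [[a, b]] := by rw [uIcc_of_le hab]; exact fun h => lt_irrefl 0 (hpos 0 h)
  have hle : ∀ x ∈ Icc a b, (1 + x ^ m)⁻¹ ≤ x ^ (-m) := fun x hx => by
    rw [rpow_neg (hpos x hx).le]
    exact inv_anti₀ (rpow_pos_of_pos (hpos x hx) m) (le_add_of_nonneg_left zero_le_one)
  have hint : IntervalIntegrable (fun x : ℝ => x ^ (-m)) MeasureTheory.volume a b :=
    intervalIntegrable_rpow (Or.inr h0)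
  calc ∫ x in a..b, (1 + x ^ m)⁻¹ ≤ ∫ x in a..b, x ^ (-m) :=
        integral_mono_on hab (intervalIntegrable_inv_one_add_rpow m ha (ha.trans_le hab)) hint hle
    _ = (a ^ (1 - m) - b ^ (1 - m)) / (m - 1) := by
        rw [integral_rpow (Or.inr ⟨by linarith, h0⟩), show -m + 1 = 1 - m by ring, ← neg_sub m 1, div_neg, ← neg_div, neg_sub]
    _ ≤ a ^ (1 - m) / (m - 1) := by
        gcongr
        exact sub_le_self _ (rpow_nonneg (ha.trans_le hab).le _)

lemma integral_inv_one_add_rpow_le {m a b : ℝ} (hm : 1 < m) (ha : 0 < a) (hab : a ≤ b) :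
    ∫ x in a..b, (1 + x ^ m)⁻¹ ≤ 2 * m / (m - 1) * (min 1 b / (1 + a ^ (m - 1))) := by
  have hm1 : 0 < m - 1 := sub_pos.mpr hm
  have hC : 2 ≤ 2 * m / (m - 1) := by rw [le_div_iff₀ hm1]; linarith
  have hp : 0 < a ^ (m - 1) := rpow_pos_of_pos ha _
  rcases le_or_gt b 1 with hb1 | hb1
  · have hp1 : a ^ (m - 1) ≤ 1 := rpow_le_one ha.le (hab.trans hb1) hm1.le
    rw [min_eq_right hb1]
    calc ∫ x in a..b, (1 + x ^ m)⁻¹ ≤ b - a := integral_inv_one_add_rpow_le_sub m ha.le hab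
      _ ≤ 2 * (b / 2) := by linarith
      _ ≤ 2 * m / (m - 1) * (b / (1 + a ^ (m - 1))) := by gcongr <;> linarith
  rw [min_eq_left hb1.le]
  rcases le_or_gt 1 a with ha1 | ha1
  · have hp1 : 1 ≤ a ^ (m - 1) := one_le_rpow ha1 hm1.le
    calc ∫ x in a..b, (1 + x ^ m)⁻¹ ≤ a ^ (1 - m) / (m - 1) :=
          integral_inv_one_add_rpow_le_rpow hm ha hab
      _ = (a ^ (m - 1))⁻¹ / (m - 1) := by rw [← rpow_neg ha.le, neg_sub]
      _ ≤ 2 * m / (m - 1) * (1 / (1 + a ^ (m - 1))) := by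
          rw [inv_eq_one_div, div_div, mul_one_div, div_div,
            div_le_div_iff₀ (by positivity) (by positivity)]
          nlinarith [mul_nonneg hm1.le (sub_nonneg.mpr hp1), mul_pos (mul_pos hm1 hp) hm1]
  · have hp1 : a ^ (m - 1) ≤ 1 := rpow_le_one ha.le ha1.le hm1.le
    calc ∫ x in a..b, (1 + x ^ m)⁻¹
        = (∫ x in a..1, (1 + x ^ m)⁻¹) + ∫ x in (1 : ℝ)..b, (1 + x ^ m)⁻¹ :=
          (integral_add_adjacent_intervals (intervalIntegrable_inv_one_add_rpow m ha one_pos)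
            (intervalIntegrable_inv_one_add_rpow m one_pos (one_pos.trans hb1))).symm
      _ ≤ (1 - a) + (1 : ℝ) ^ (1 - m) / (m - 1) :=
          add_le_add (integral_inv_one_add_rpow_le_sub m ha.le ha1.le)
            (integral_inv_one_add_rpow_le_rpow hm one_pos hb1.le)
      _ ≤ 2 * m / (m - 1) * (1 / 2) := by
          rw [one_rpow, show 2 * m / (m - 1) * (1 / 2) = 1 + 1 / (m - 1) by field_simp; ring]
          linarith
      _ ≤ 2 * m / (m - 1) * (1 / (1 + a ^ (m - 1))) := by gcongr; linarith

lemma integral_exp_div_one_add_exp_mul_rpow (m : ℝ) {ε a : ℝ} (hε : 0 < ε) (ha : 0 < a) (t : ℝ) :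
    ∫ s in (0 : ℝ)..t, exp ((t - s) / ε) / (1 + exp (m * (t - s) / ε) * a ^ m)
      = ε / a * ∫ x in a..exp (t / ε) * a, (1 + x ^ m)⁻¹ := by
  have hφ : ∀ s ∈ [[0, t]], HasDerivAt (fun s => exp ((t - s) / ε) * a)
      (-(exp ((t - s) / ε) * a / ε)) s := fun s _ =>
    ((((hasDerivAt_id' s).const_sub t).div_const ε).exp.mul_const a).congr_deriv (by ring)
  have hsubst := integral_comp_mul_deriv' hφ (by fun_prop)
    ((continuousOn_inv_one_add_rpow m).mono (by
      rintro _ ⟨s, _, rfl⟩; exact mul_pos (exp_pos _) ha))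
  simp only [Function.comp_def, sub_zero, sub_self, zero_div, exp_zero, one_mul] at hsubst
  rw [integral_symm (exp (t / ε) * a) a, ← hsubst, ← integral_neg, ← integral_const_mul]
  refine integral_congr fun s _ => ?_
  rw [mul_rpow (exp_pos _).le ha.le, ← exp_mul, show (t - s) / ε * m = m * (t - s) / ε by ring]
  field_simp

theorem stmt5 (m : ℝ) (hm : 1 < m) :
    ∃ C > 0, ∀ (ε t y v α : ℝ), ε ∈ Set.Ioo (0 : ℝ) 1 → 0 ≤ t →
      α ∈ Set.Ioo (0 : ℝ) 1 → 0 < v → y ≠ v ^ α →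
      ∫ s in (0 : ℝ)..t,
          Real.exp ((t - s) / ε) / (1 + Real.exp (m * (t - s) / ε) * |y - v ^ α| ^ m)
        ≤ (C * ε / |y - v ^ α|) *
            (min 1 (Real.exp (t / ε) * |y - v ^ α|) / (1 + |y - v ^ α| ^ (m - 1))) := by
  refine ⟨2 * m / (m - 1), div_pos (by linarith) (sub_pos.mpr hm), ?_⟩
  intro ε t y v α hε ht _ _ hy
  have ha : 0 < |y - v ^ α| := abs_pos.mpr (sub_ne_zero.mpr hy)
  have hab : |y - v ^ α| ≤ exp (t / ε) * |y - v ^ α| :=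
    le_mul_of_one_le_left ha.le (one_le_exp (div_nonneg ht hε.1.le))
  calc _ = ε / |y - v ^ α| * ∫ x in |y - v ^ α|..exp (t / ε) * |y - v ^ α|, (1 + x ^ m)⁻¹ :=
        integral_exp_div_one_add_exp_mul_rpow m hε.1 ha t
    _ ≤ ε / |y - v ^ α| * (2 * m / (m - 1) *
          (min 1 (exp (t / ε) * |y - v ^ α|) / (1 + |y - v ^ α| ^ (m - 1)))) :=
        mul_le_mul_of_nonneg_left (integral_inv_one_add_rpow_le hm ha hab)
          (div_nonneg hε.1.le ha.le)
    _ = _ := by ring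
end

section
/- Upper bound for the characteristics: Let ε > 0, α ∈ (0,1), v > 0 and suppose Y : [0,∞) → ℝ is differentiable with Y' (t) = (Y(t) - V(t)^α)/ε where (9/10)v ≤ V(t) ≤ v for all t, and Y(0) = y ≤ (v/3)^α. Then Y(t) ≤ (v/3)^α for all t ≥ 0. -/
theorem stmt12 (ε α v y : ℝ) (Y V : ℝ → ℝ) (hε : 0 < ε)
    (hα : α ∈ Set.Ioo (0 : ℝ) 1) (hv : 0 < v)
    (hV : ∀ t ≥ (0 : ℝ), (9 / 10) * v ≤ V t ∧ V t ≤ v)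
    (hY : ∀ t ≥ (0 : ℝ), HasDerivAt Y ((Y t - V t ^ α) / ε) t)
    (hY0 : Y 0 = y) (hy : y ≤ (v / 3) ^ α) :
    ∀ t ≥ (0 : ℝ), Y t ≤ (v / 3) ^ α := by
  set c : ℝ := (v / 3) ^ α with hc
  set g : ℝ → ℝ := fun t => (Y t - c) * Real.exp (-t / ε) with hg
  have hderiv : ∀ t ≥ (0 : ℝ), HasDerivAt g
      (((Y t - V t ^ α) / ε) * Real.exp (-t / ε)
        + (Y t - c) * (Real.exp (-t / ε) * (-1 / ε))) t := by
    intro t ht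
    have hexp : HasDerivAt (fun t : ℝ => Real.exp (-t / ε))
        (Real.exp (-t / ε) * (-1 / ε)) t := by
      have h1 : HasDerivAt (fun t : ℝ => -t / ε) (-1 / ε) t :=
        (hasDerivAt_id t).neg.div_const ε
      exact h1.exp
    exact ((hY t ht).sub_const c).mul hexp
  have hcle : ∀ t ≥ (0 : ℝ), c ≤ V t ^ α := by
    intro t ht
    have h1 : v / 3 ≤ V t := by nlinarith [(hV t ht).1]
    have h2 : (0 : ℝ) ≤ v / 3 := by positivity
    exact Real.rpow_le_rpow h2 h1 hα.1.le
  have hmono : AntitoneOn g (Set.Ici (0 : ℝ)) := by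
    apply antitoneOn_of_deriv_nonpos (convex_Ici 0)
    · intro t ht
      exact (hderiv t ht).continuousAt.continuousWithinAt
    · intro t ht
      rw [interior_Ici] at ht
      exact (hderiv t (le_of_lt ht)).differentiableAt.differentiableWithinAt
    · intro t ht
      rw [interior_Ici] at ht
      rw [(hderiv t (le_of_lt ht)).deriv]
      have hcle' := hcle t (le_of_lt ht)
      have hexp_pos : 0 < Real.exp (-t / ε) := Real.exp_pos _
      have : ((Y t - V t ^ α) / ε) * Real.exp (-t / ε)
          + (Y t - c) * (Real.exp (-t / ε) * (-1 / ε))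
          = ((c - V t ^ α) / ε) * Real.exp (-t / ε) := by
        field_simp
        ring
      rw [this]
      apply mul_nonpos_of_nonpos_of_nonneg
      · apply div_nonpos_of_nonpos_of_nonneg _ hε.le
        linarith
      · exact hexp_pos.le
  intro t ht
  have := hmono (Set.self_mem_Ici) ht ht
  simp only [hg] at this
  have h0 : (Y 0 - c) * Real.exp (-0 / ε) = y - c := by
    rw [hY0]; simp
  rw [h0] at this
  have hyc : y - c ≤ 0 := by linarith
  have hexp_pos : 0 < Real.exp (-t / ε) := Real.exp_pos _
  nlinarith [this, hexp_pos]
end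

section
/- Moment decay under fast decay of the profile: Let α ∈ (0,1), b > k+1 ≥ 1, m ≥ b/α + 1, A ≥ 1, t ∈ [0,1], ε ∈ (0,1), and let P(y,w) = A e^{t/ε} / ((1+w^b)(1 + e^{mt/ε}|y - w^α|^m)). Then there is a constant C depending only on α, b, k, m such that for all y ≤ 0: ∫₀^∞ w^k P(y,w) dw ≤ C·A / (1 + (e^{t/ε}|y|)^{m-1}). -/
open MeasureTheory

private lemma key15 (m X Y : ℝ) (hm : 1 ≤ m) (hX : 0 ≤ X) (hY : 0 ≤ Y) :
    X * (1 + Y ^ (m - 1)) ≤ 2 * (1 + (X + Y) ^ m) := by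
  have hm0 : 0 ≤ m := by linarith
  have h1 : X ≤ 1 + (X + Y) ^ m := by
    have hXm : X ^ m ≤ (X + Y) ^ m := Real.rpow_le_rpow hX (by linarith) hm0
    rcases le_or_gt X 1 with h | h
    · nlinarith [Real.rpow_nonneg (by linarith : (0:ℝ) ≤ X + Y) m]
    · have hXX : X ^ (1:ℝ) ≤ X ^ m := Real.rpow_le_rpow_of_exponent_le h.le hm
      rw [Real.rpow_one] at hXX
      linarith
  have h2 : X * Y ^ (m - 1) ≤ (X + Y) ^ m := by
    rcases eq_or_lt_of_le hX with h | hXpos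
    · simp only [← h, zero_mul, zero_add]
      exact Real.rpow_nonneg hY m
    · have hXY : 0 < X + Y := by linarith
      have heq : (X + Y) ^ m = (X + Y) * (X + Y) ^ (m - 1) := by
        rw [← Real.rpow_one_add' hXY.le (by intro h; linarith), add_sub_cancel]
      rw [heq]
      have h3 : Y ^ (m - 1) ≤ (X + Y) ^ (m - 1) :=
        Real.rpow_le_rpow hY (by linarith) (by linarith)
      nlinarith [Real.rpow_nonneg hY (m-1)]
  linarith

private lemma int15 (p b : ℝ) (hp : -1 < p) (hpb : p - b < -1) :
    IntegrableOn (fun w => w ^ p / (1 + w ^ b)) (Set.Ioi (0:ℝ)) := by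
  have hmeas : Measurable fun w : ℝ => w ^ p / (1 + w ^ b) := by fun_prop
  have hnn : ∀ w : ℝ, 0 < w → 0 ≤ w ^ p / (1 + w ^ b) := fun w hw =>
    div_nonneg (Real.rpow_nonneg hw.le p)
      (by nlinarith [Real.rpow_nonneg hw.le b])
  rw [← Set.Ioc_union_Ioi_eq_Ioi (zero_le_one (α := ℝ))]
  apply IntegrableOn.union
  · have hint : IntegrableOn (fun w : ℝ => w ^ p) (Set.Ioc (0:ℝ) 1) := by
      have := intervalIntegral.intervalIntegrable_rpow' (a := 0) (b := 1) hp
      rwa [intervalIntegrable_iff_integrableOn_Ioc_of_le (by norm_num)] at this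
    refine hint.mono' hmeas.aestronglyMeasurable ?_
    filter_upwards [ae_restrict_mem measurableSet_Ioc] with w hw
    rw [Real.norm_eq_abs, abs_of_nonneg (hnn w hw.1)]
    have h1 : (1:ℝ) ≤ 1 + w ^ b := by nlinarith [Real.rpow_nonneg hw.1.le b]
    calc w ^ p / (1 + w ^ b) ≤ w ^ p / 1 :=
          div_le_div_of_nonneg_left (Real.rpow_nonneg hw.1.le p) zero_lt_one h1
      _ = w ^ p := div_one _
  · have hint : IntegrableOn (fun w : ℝ => w ^ (p - b)) (Set.Ioi (1:ℝ)) :=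
      integrableOn_Ioi_rpow_of_lt hpb zero_lt_one
    refine hint.mono' hmeas.aestronglyMeasurable ?_
    filter_upwards [ae_restrict_mem measurableSet_Ioi] with w hw
    have hw0 : (0:ℝ) < w := lt_trans zero_lt_one hw
    rw [Real.norm_eq_abs, abs_of_nonneg (hnn w hw0)]
    have hwb : (0:ℝ) < w ^ b := Real.rpow_pos_of_pos hw0 b
    calc w ^ p / (1 + w ^ b) ≤ w ^ p / w ^ b :=
          div_le_div_of_nonneg_left (Real.rpow_nonneg hw0.le p) hwb (by linarith)
      _ = w ^ (p - b) := (Real.rpow_sub hw0 p b).symm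

set_option maxHeartbeats 1000000 in
theorem stmt15 (α b k m : ℝ) (hα : α ∈ Set.Ioo (0 : ℝ) 1) (hk : 0 ≤ k)
    (hb : k + 1 < b) (hm : b / α + 1 ≤ m) :
    ∃ C > 0, ∀ (A t ε y : ℝ), 1 ≤ A → t ∈ Set.Icc (0 : ℝ) 1 →
      ε ∈ Set.Ioo (0 : ℝ) 1 → y ≤ 0 →
      ∫ w in Set.Ioi (0 : ℝ),
          w ^ k *
            (A * Real.exp (t / ε) /
              ((1 + w ^ b) * (1 + Real.exp (m * t / ε) * |y - w ^ α| ^ m)))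
        ≤ C * A / (1 + (Real.exp (t / ε) * |y|) ^ (m - 1)) := by
  obtain ⟨hα0, hα1⟩ := hα
  have hb0 : (0:ℝ) < b := by linarith
  have hm1 : (1:ℝ) ≤ m := by
    have : (0:ℝ) < b / α := div_pos hb0 hα0
    linarith
  have hp : (-1:ℝ) < k - α := by linarith
  have hpb : k - α - b < -1 := by linarith
  set g : ℝ → ℝ := fun w => w ^ (k - α) / (1 + w ^ b) with hg
  have hgint : IntegrableOn g (Set.Ioi (0:ℝ)) := int15 _ _ hp hpb
  set C₀ : ℝ := ∫ w in Set.Ioi (0:ℝ), g w with hC₀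
  have hC₀0 : 0 ≤ C₀ := by
    apply setIntegral_nonneg measurableSet_Ioi
    intro w hw
    exact div_nonneg (Real.rpow_nonneg (le_of_lt hw) _)
      (by nlinarith [Real.rpow_nonneg (le_of_lt hw) b])
  refine ⟨2 * C₀ + 1, by positivity, fun A t ε y hA ht hε hy => ?_⟩
  set E : ℝ := Real.exp (t / ε) with hE
  have hE1 : (1:ℝ) ≤ E := Real.one_le_exp (div_nonneg ht.1 hε.1.le)
  set Y : ℝ := E * |y| with hYdef
  have hY0 : 0 ≤ Y := mul_nonneg (by positivity) (abs_nonneg y)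
  have hYm : 0 ≤ Y ^ (m - 1) := Real.rpow_nonneg hY0 _
  have hden : (0:ℝ) < 1 + Y ^ (m - 1) := by linarith
  set c : ℝ := 2 * A / (1 + Y ^ (m - 1)) with hc
  have hc0 : 0 ≤ c := div_nonneg (by linarith) hden.le
  have key : ∀ w ∈ Set.Ioi (0:ℝ),
      w ^ k * (A * E / ((1 + w ^ b) * (1 + Real.exp (m * t / ε) * |y - w ^ α| ^ m)))
        ≤ c * g w := by
    intro w hw
    have hw0 : (0:ℝ) < w := hw
    have hwα : (0:ℝ) < w ^ α := Real.rpow_pos_of_pos hw0 α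
    set X : ℝ := E * w ^ α with hX
    have hX0 : 0 < X := mul_pos (Real.exp_pos _) hwα
    have habs : |y - w ^ α| = w ^ α + |y| := by
      rw [abs_of_nonpos (by linarith : y - w ^ α ≤ 0), abs_of_nonpos hy]; ring
    have hEm : Real.exp (m * t / ε) * |y - w ^ α| ^ m = (X + Y) ^ m := by
      rw [show m * t / ε = t / ε * m by ring, Real.exp_mul, habs,
        ← Real.mul_rpow (le_of_lt (Real.exp_pos _)) (by positivity)]
      rw [hX, hYdef, hE]; ring_nf
    rw [hEm]
    have hD1 : (0:ℝ) < 1 + w ^ b := by nlinarith [Real.rpow_nonneg hw0.le b]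
    have hXYm : 0 ≤ (X + Y) ^ m := Real.rpow_nonneg (by linarith) m
    have hD2 : (0:ℝ) < 1 + (X + Y) ^ m := by linarith
    have hwk : w ^ k = w ^ (k - α) * w ^ α := by
      rw [← Real.rpow_add hw0]; ring_nf
    have hkey := key15 m X Y hm1 hX0.le hY0
    have hwp : 0 ≤ w ^ (k - α) := Real.rpow_nonneg hw0.le _
    have lhs_eq : w ^ k * (A * E / ((1 + w ^ b) * (1 + (X + Y) ^ m)))
        = w ^ (k - α) * A * X / ((1 + w ^ b) * (1 + (X + Y) ^ m)) := by
      rw [hwk, hX]; ring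
    have rhs_eq : c * g w
        = 2 * A * w ^ (k - α) / ((1 + Y ^ (m - 1)) * (1 + w ^ b)) := by
      rw [hc, hg]; rw [div_mul_div_comm]
    rw [lhs_eq, rhs_eq, div_le_div_iff₀ (by positivity) (by positivity)]
    nlinarith [mul_le_mul_of_nonneg_left hkey
      (by positivity : (0:ℝ) ≤ w ^ (k - α) * A * (1 + w ^ b))]
  have hf_nonneg : 0 ≤ᵐ[volume.restrict (Set.Ioi (0:ℝ))] fun w =>
      w ^ k * (A * E / ((1 + w ^ b) * (1 + Real.exp (m * t / ε) * |y - w ^ α| ^ m))) := by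
    filter_upwards [ae_restrict_mem measurableSet_Ioi] with w hw
    have hw0 : (0:ℝ) < w := hw
    have h1 : (0:ℝ) ≤ 1 + w ^ b := by nlinarith [Real.rpow_nonneg hw0.le b]
    have h2 : (0:ℝ) ≤ 1 + Real.exp (m * t / ε) * |y - w ^ α| ^ m := by
      have := Real.rpow_nonneg (abs_nonneg (y - w ^ α)) m
      nlinarith [Real.exp_pos (m * t / ε)]
    exact mul_nonneg (Real.rpow_nonneg hw0.le k)
      (div_nonneg (by positivity) (mul_nonneg h1 h2))
  have hf_le : (fun w => w ^ k * (A * E /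
      ((1 + w ^ b) * (1 + Real.exp (m * t / ε) * |y - w ^ α| ^ m))))
      ≤ᵐ[volume.restrict (Set.Ioi (0:ℝ))] fun w => c * g w := by
    filter_upwards [ae_restrict_mem measurableSet_Ioi] with w hw
    exact key w hw
  have hmono := integral_mono_of_nonneg hf_nonneg (hgint.const_mul c) hf_le
  calc ∫ w in Set.Ioi (0:ℝ), w ^ k * (A * E /
        ((1 + w ^ b) * (1 + Real.exp (m * t / ε) * |y - w ^ α| ^ m)))
      ≤ ∫ w in Set.Ioi (0:ℝ), c * g w := hmono
    _ = c * C₀ := by rw [MeasureTheory.integral_const_mul]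
    _ ≤ (2 * C₀ + 1) * A / (1 + Y ^ (m - 1)) := by
        rw [hc, div_mul_eq_mul_div]
        gcongr ?_ / _
        nlinarith
end
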